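/- Let R be an associative unital ring (not necessarily commutative), α : ℤ → R a family of elements, and S_s^k(n) the associated non-commutative Svinin polynomials. Let m ≥ 1 be an integer and let d_{2k} (0 ≤ k ≤ m) and c_{2k+1} (0 ≤ k ≤ m) be central elements of R. Define, for 0 ≤ k ≤ m and n ∈ ℤ, B_{2k+1,n} := c_{2k+1} − Σ_{r=1}^{m−k} d_{2(k+r)} · S_r^r(n+r−1) and P_{2k,n} := Σ_{r=0}^{m−k} d_{2(k+r)} · S_{r+1}^r(n+r−1). Then for every integer 1 ≤ k ≤ m and every n ∈ ℤ, α_n · P_{2(k−1),n+1} − P_{2(k−1),n} · α_n + α_n · B_{2k−1,n+1} − B_{2k−1,n−1} · α_n = 0. -/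

import Mathlib

/-- Non-commutative Svinin polynomials: `svinin α s k n` is `S_s^k(n)`, defined by
`S_s^0(n) = 1` and `S_s^k(n) = Σ_{j=0}^{s−1} α_{n−k−j+1} · S_{s−j}^{k−1}(n−j)` for `k ≥ 1`. -/
def svinin {R : Type*} [Ring R] (α : ℤ → R) : ℕ → ℕ → ℤ → R
  | _, 0, _ => 1
  | s, k + 1, n =>
      ∑ j ∈ Finset.range s,
        α (n - ((k : ℤ) + 1) - (j : ℤ) + 1) * svinin α (s - j) k (n - (j : ℤ))

/-- `Bcoef α m d c k n` is `B_{2k+1,n} = c_{2k+1} − Σ_{r=1}^{m−k} d_{2(k+r)} · S_r^r(n+r−1)`,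
where `d j` stands for `d_{2j}` and `c j` stands for `c_{2j+1}`. -/
def Bcoef {R : Type*} [Ring R] (α : ℤ → R) (m : ℕ) (d c : ℕ → R) (k : ℕ) (n : ℤ) : R :=
  c k - ∑ r ∈ Finset.Icc 1 (m - k), d (k + r) * svinin α r r (n + (r : ℤ) - 1)

/-- `Pcoef α m d k n` is `P_{2k,n} = Σ_{r=0}^{m−k} d_{2(k+r)} · S_{r+1}^r(n+r−1)`,
where `d j` stands for `d_{2j}`. -/
def Pcoef {R : Type*} [Ring R] (α : ℤ → R) (m : ℕ) (d : ℕ → R) (k : ℕ) (n : ℤ) : R :=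
  ∑ r ∈ Finset.range (m - k + 1), d (k + r) * svinin α (r + 1) r (n + (r : ℤ) - 1)

/-
Both commutators `α_n X(n+1) − X(n) α_n` (with `X(n−1)` for `B`) expand termwise in the central
coefficients `d`. The `r = 0` term of `P` vanishes, and for `r ≥ 1` the `r`-th terms of `P` and `B`
agree: peeling off the first summand of the recursion gives
`S_{s+1}^{k+1}(n) = α_{n−k} S_{s+1}^k(n) + S_s^{k+1}(n−1)`, a double induction gives
`S_{s+1}^{k+1}(n) − S_s^{k+1}(n) = S_{s+1}^k(n−1) α_{n−s}`, and for `s = k + 1` each identity turns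
the difference of the two terms into `α_n S_{k+2}^k(n+k) α_n`.
-/

section Svinin

variable {R : Type*} [Ring R] (α : ℤ → R)

@[simp]
lemma svinin_zero_succ (k : ℕ) (n : ℤ) : svinin α 0 (k + 1) n = 0 := by
  simp [svinin]

lemma svinin_succ_succ (s k : ℕ) (n : ℤ) :
    svinin α (s + 1) (k + 1) n = α (n - k) * svinin α (s + 1) k n + svinin α s (k + 1) (n - 1) := by
  rw [svinin, Finset.sum_range_succ', svinin, add_comm]
  congr 1
  · simp only [Nat.cast_zero, Nat.sub_zero, sub_zero]
    ring_nf
  · refine Finset.sum_congr rfl fun j _ => ?_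
    rw [Nat.add_sub_add_right]
    push_cast
    ring_nf

lemma svinin_succ_sub_svinin (k s : ℕ) (n : ℤ) :
    svinin α (s + 1) (k + 1) n - svinin α s (k + 1) n = svinin α (s + 1) k (n - 1) * α (n - s) := by
  induction k generalizing s n with
  | zero =>
    simp only [svinin, CharP.cast_eq_zero, zero_add, mul_one, Finset.sum_range_succ,
      add_sub_cancel_left, one_mul]
    ring_nf
  | succ k ihk =>
    induction s generalizing n with
    | zero =>
      have h := ihk 0 n
      simp only [svinin_zero_succ, sub_zero, Nat.cast_zero] at h ⊢
      rw [svinin_succ_succ, svinin_succ_succ α 0 k (n - 1), h]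
      simp only [svinin_zero_succ, add_zero, ← mul_assoc]
      push_cast
      ring_nf
    | succ s ihs =>
      calc svinin α (s + 1 + 1) (k + 1 + 1) n - svinin α (s + 1) (k + 1 + 1) n
          = α (n - (k + 1 : ℕ)) * (svinin α (s + 1 + 1) (k + 1) n - svinin α (s + 1) (k + 1) n)
            + (svinin α (s + 1) (k + 1 + 1) (n - 1) - svinin α s (k + 1 + 1) (n - 1)) := by
            rw [svinin_succ_succ α (s + 1) (k + 1) n, svinin_succ_succ α s (k + 1) n, mul_sub]
            abel
        _ = (α (n - 1 - k) * svinin α (s + 1 + 1) k (n - 1) + svinin α (s + 1) (k + 1) (n - 1 - 1))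
              * α (n - (s + 1 : ℕ)) := by
            rw [ihk, ihs, add_mul, mul_assoc]
            push_cast
            ring_nf
        _ = svinin α (s + 1 + 1) (k + 1) (n - 1) * α (n - (s + 1 : ℕ)) := by
            rw [svinin_succ_succ α (s + 1) k (n - 1)]

lemma mul_svinin_sub_svinin_mul_eq (r : ℕ) (n : ℤ) :
    α n * svinin α (r + 1 + 1) (r + 1) (n + r + 1) - svinin α (r + 1 + 1) (r + 1) (n + r) * α n
      = α n * svinin α (r + 1) (r + 1) (n + r + 1)
        - svinin α (r + 1) (r + 1) (n + r - 1) * α n := by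
  have hlast := svinin_succ_sub_svinin α r (r + 1) (n + r + 1)
  have hfirst := svinin_succ_succ α (r + 1) r (n + r)
  push_cast at hlast
  rw [show n + r + 1 - (r + 1) = n by ring, add_sub_cancel_right] at hlast
  rw [add_sub_cancel_right] at hfirst
  rw [eq_add_of_sub_eq hlast, hfirst]
  noncomm_ring

end Svinin

lemma Finset.mul_sum_sub_sum_mul_of_commute {ι R : Type*} [Ring R] (s : Finset ι) (a : R)
    (d x y : ι → R) (h : ∀ i ∈ s, Commute a (d i)) :
    a * ∑ i ∈ s, d i * x i - (∑ i ∈ s, d i * y i) * a = ∑ i ∈ s, d i * (a * x i - y i * a) := by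
  rw [Finset.mul_sum, Finset.sum_mul, ← Finset.sum_sub_distrib]
  refine Finset.sum_congr rfl fun i hi => ?_
  rw [mul_sub, ← mul_assoc, (h i hi).eq, mul_assoc, mul_assoc]

section Coefficients

variable {R : Type*} [Ring R] (α : ℤ → R) {m : ℕ} {d : ℕ → R}

lemma sum_range_svinin_commutator_eq_sum_Icc (e : ℕ → R) (M : ℕ) (n : ℤ) :
    ∑ r ∈ Finset.range (M + 1),
        e r * (α n * svinin α (r + 1) r (n + r) - svinin α (r + 1) r (n + r - 1) * α n)
      = ∑ r ∈ Finset.Icc 1 M,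
        e r * (α n * svinin α r r (n + r) - svinin α r r (n + r - 2) * α n) := by
  rw [Finset.range_eq_Ico, Finset.sum_eq_sum_Ico_succ_bot (by omega : 0 < M + 1), zero_add,
    Finset.Ico_add_one_right_eq_Icc]
  simp only [svinin, mul_one, one_mul, sub_self, mul_zero, zero_add]
  refine Finset.sum_congr rfl fun r hr => ?_
  obtain ⟨t, rfl⟩ := Nat.exists_eq_add_of_le' (Finset.mem_Icc.mp hr).1
  push_cast
  rw [← add_assoc, add_sub_cancel_right, show n + t + 1 - 2 = n + t - 1 by ring,
    mul_svinin_sub_svinin_mul_eq]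

lemma mul_Pcoef_sub_Pcoef_mul (hd : ∀ j ≤ m, d j ∈ Set.center R) {K : ℕ} (hK : K ≤ m) (n : ℤ) :
    α n * Pcoef α m d K (n + 1) - Pcoef α m d K n * α n
      = ∑ r ∈ Finset.range (m - K + 1), d (K + r)
          * (α n * svinin α (r + 1) r (n + r) - svinin α (r + 1) r (n + r - 1) * α n) := by
  rw [Pcoef, Pcoef, Finset.mul_sum_sub_sum_mul_of_commute]
  · simp only [add_right_comm n 1, add_sub_cancel_right]
  · intro r hr
    exact ((Set.mem_center_iff.mp (hd _ (by grind))).comm _).symm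

lemma mul_Bcoef_sub_Bcoef_mul (hd : ∀ j ≤ m, d j ∈ Set.center R) {c : ℕ → R} {K : ℕ}
    (hc : c K ∈ Set.center R) (n : ℤ) :
    α n * Bcoef α m d c K (n + 1) - Bcoef α m d c K (n - 1) * α n
      = -∑ r ∈ Finset.Icc 1 (m - K), d (K + r)
          * (α n * svinin α r r (n + r) - svinin α r r (n + r - 2) * α n) := by
  rw [Bcoef, Bcoef, mul_sub, sub_mul, ((Set.mem_center_iff.mp hc).comm _).eq,
    sub_sub_sub_cancel_left, ← neg_sub, Finset.mul_sum_sub_sum_mul_of_commute]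
  · congr 1
    refine Finset.sum_congr rfl fun r _ => ?_
    rw [show n + 1 + (r : ℤ) - 1 = n + r by ring, show n - 1 + (r : ℤ) - 1 = n + r - 2 by ring]
  · intro r hr
    exact ((Set.mem_center_iff.mp (hd _ (by grind))).comm _).symm

end Coefficients

theorem dPI_system_second_set_general {R : Type*} [Ring R] (α : ℤ → R)
    (m : ℕ) (d c : ℕ → R)
    (hd : ∀ k ≤ m, d k ∈ Set.center R) (hc : ∀ k ≤ m, c k ∈ Set.center R)
    (k : ℕ) (hk2 : k ≤ m) (n : ℤ) :
    α n * Pcoef α m d (k - 1) (n + 1) - Pcoef α m d (k - 1) n * α n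
      + α n * Bcoef α m d c (k - 1) (n + 1) - Bcoef α m d c (k - 1) (n - 1) * α n = 0 := by
  have hK : k - 1 ≤ m := by omega
  rw [add_sub_assoc, mul_Pcoef_sub_Pcoef_mul α hd hK, mul_Bcoef_sub_Bcoef_mul α hd (hc _ hK),
    sum_range_svinin_commutator_eq_sum_Icc, add_neg_cancel]

/-- For `1 ≤ k ≤ m` and all `n`:
`α_n · P_{2(k−1),n+1} − P_{2(k−1),n} · α_n + α_n · B_{2k−1,n+1} − B_{2k−1,n−1} · α_n = 0`. -/
theorem dPI_system_second_set {R : Type*} [Ring R] (α : ℤ → R)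
    (m : ℕ) (hm : 1 ≤ m) (d c : ℕ → R)
    (hd : ∀ k ≤ m, d k ∈ Set.center R) (hc : ∀ k ≤ m, c k ∈ Set.center R)
    (k : ℕ) (hk1 : 1 ≤ k) (hk2 : k ≤ m) (n : ℤ) :
    α n * Pcoef α m d (k - 1) (n + 1) - Pcoef α m d (k - 1) n * α n
      + α n * Bcoef α m d c (k - 1) (n + 1) - Bcoef α m d c (k - 1) (n - 1) * α n = 0 :=
  dPI_system_second_set_general α m d c hd hc k hk2 n
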